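/- arXiv:1707.02496 — 2 statements merged into one kernel-verified Lean document; each statement's English description precedes it below -/
import Mathlib

section
/- Every Ho–Lee forward curve started from a Nelson–Siegel curve is a linearly extended Nelson–Siegel curve: let z₁, z₂, z₃ ∈ ℝ, λ > 0, σ ∈ ℝ, r ∈ ℝ, t ≥ 0, and let f_HL(t,τ) = r + σ²·t·τ + (z₂ + z₃(t+τ))·exp(−λ(t+τ)) − (z₂ + z₃t)·exp(−λt) for τ ≥ 0. Then there exist β₀, β₁, β₂, β₃ ∈ ℝ such that for all τ ≥ 0, f_HL(t,τ) = β₀·τ + β₁ + β₂·exp(−λτ) + β₃·τ·exp(−λτ). -/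
open Real

theorem affine_mul_exp_neg_mul_add (a b lam t τ : ℝ) :
    (a + b * (t + τ)) * exp (-lam * (t + τ))
      = (a + b * t) * exp (-lam * t) * exp (-lam * τ)
        + b * exp (-lam * t) * τ * exp (-lam * τ) := by
  rw [show -lam * (t + τ) = -lam * t + -lam * τ by ring, exp_add]
  ring

theorem hoLee_forward_is_linearly_extended_NS_general (z₂ z₃ lam σ r t : ℝ)
    (fHL : ℝ → ℝ → ℝ)
    (hf : ∀ τ, fHL t τ = r + σ ^ 2 * t * τ
        + (z₂ + z₃ * (t + τ)) * Real.exp (-lam * (t + τ))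
        - (z₂ + z₃ * t) * Real.exp (-lam * t)) :
    ∃ β₀ β₁ β₂ β₃ : ℝ, ∀ τ ≥ (0 : ℝ),
      fHL t τ = β₀ * τ + β₁ + β₂ * Real.exp (-lam * τ)
        + β₃ * τ * Real.exp (-lam * τ) := by
  refine ⟨σ ^ 2 * t, r - (z₂ + z₃ * t) * exp (-lam * t),
    (z₂ + z₃ * t) * exp (-lam * t), z₃ * exp (-lam * t), fun τ _ => ?_⟩
  rw [hf τ, affine_mul_exp_neg_mul_add]
  ring

/-- The Ho–Lee forward curve started from a Nelson–Siegel curve is a linearly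
extended Nelson–Siegel curve. -/
theorem hoLee_forward_is_linearly_extended_NS (z₁ z₂ z₃ lam σ r t : ℝ)
    (hlam : 0 < lam) (ht : 0 ≤ t) (fHL : ℝ → ℝ → ℝ)
    (hf : ∀ τ, fHL t τ = r + σ ^ 2 * t * τ
        + (z₂ + z₃ * (t + τ)) * Real.exp (-lam * (t + τ))
        - (z₂ + z₃ * t) * Real.exp (-lam * t)) :
    ∃ β₀ β₁ β₂ β₃ : ℝ, ∀ τ ≥ (0 : ℝ),
      fHL t τ = β₀ * τ + β₁ + β₂ * Real.exp (-lam * τ)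
        + β₃ * τ * Real.exp (-lam * τ) :=
  hoLee_forward_is_linearly_extended_NS_general z₂ z₃ lam σ r t fHL hf
end

section
/- Every Hull–White forward curve started from a Nelson–Siegel curve is an exponentially extended Nelson–Siegel curve: let z₁, z₂, z₃ ∈ ℝ, λ > 0, a > 0, σ ∈ ℝ, r ∈ ℝ, t ≥ 0, let f*(τ) = z₁ + z₂·exp(−λτ) + z₃·τ·exp(−λτ), α(t) = f*(t) + (σ²/(2a²))·(1 − exp(−at))², and let f_HW(t,τ) = −(σ²/(2a²))·(1 − exp(−aτ))² + f*(t+τ) + (σ²/(2a²))·(1 − exp(−a(t+τ)))² − α(t)·exp(−aτ) + r·exp(−aτ) for τ ≥ 0. Then there exist β₁, β₂, β₃, β₄, β₅ ∈ ℝ such that for all τ ≥ 0, f_HW(t,τ) = β₁·exp(−aτ) + β₂·exp(−2aτ) + β₃ + β₄·exp(−λτ) + β₅·τ·exp(−λτ). -/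
/-! Shifting a Nelson–Siegel curve in time gives a Nelson–Siegel curve with the same decay `λ`,
since `exp (-λ (t + τ)) = exp (-λ t) exp (-λ τ)`; likewise the two convexity terms expand into
`1`, `exp (-a τ)` and `exp (-a τ) ^ 2 = exp (-2 a τ)`. -/

open Real

noncomputable def nelsonSiegel (z₁ z₂ z₃ lam τ : ℝ) : ℝ :=
  z₁ + z₂ * exp (-lam * τ) + z₃ * τ * exp (-lam * τ)

lemma exp_neg_mul_add (c t τ : ℝ) : exp (-c * (t + τ)) = exp (-c * t) * exp (-c * τ) := by
  rw [← exp_add]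
  ring_nf

lemma exp_neg_two_mul_mul (a τ : ℝ) : exp (-(2 * a) * τ) = exp (-a * τ) ^ 2 := by
  rw [sq, ← exp_add]
  ring_nf

lemma nelsonSiegel_add (z₁ z₂ z₃ lam t τ : ℝ) :
    nelsonSiegel z₁ z₂ z₃ lam (t + τ) =
      nelsonSiegel z₁ ((z₂ + z₃ * t) * exp (-lam * t)) (z₃ * exp (-lam * t)) lam τ := by
  simp only [nelsonSiegel, exp_neg_mul_add]
  ring

theorem hullWhite_forward_is_exponentially_extended_NS_general (z₁ z₂ z₃ lam a σ r t : ℝ)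
    (fstar : ℝ → ℝ)
    (hfstar : ∀ τ, fstar τ = z₁ + z₂ * Real.exp (-lam * τ) + z₃ * τ * Real.exp (-lam * τ))
    (α : ℝ → ℝ)
    (fHW : ℝ → ℝ → ℝ)
    (hf : ∀ τ, fHW t τ =
        -(σ ^ 2 / (2 * a ^ 2)) * (1 - Real.exp (-a * τ)) ^ 2
        + fstar (t + τ) + σ ^ 2 / (2 * a ^ 2) * (1 - Real.exp (-a * (t + τ))) ^ 2
        - α t * Real.exp (-a * τ) + r * Real.exp (-a * τ)) :
    ∃ β₁ β₂ β₃ β₄ β₅ : ℝ, ∀ τ ≥ (0 : ℝ),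
      fHW t τ = β₁ * Real.exp (-a * τ) + β₂ * Real.exp (-(2 * a) * τ) + β₃
        + β₄ * Real.exp (-lam * τ) + β₅ * τ * Real.exp (-lam * τ) := by
  refine ⟨σ ^ 2 / a ^ 2 * (1 - exp (-a * t)) - α t + r,
    σ ^ 2 / (2 * a ^ 2) * (exp (-a * t) ^ 2 - 1), z₁,
    (z₂ + z₃ * t) * exp (-lam * t), z₃ * exp (-lam * t), fun τ _ => ?_⟩
  have hshift : fstar (t + τ) =
      nelsonSiegel z₁ ((z₂ + z₃ * t) * exp (-lam * t)) (z₃ * exp (-lam * t)) lam τ :=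
    (hfstar _).trans (nelsonSiegel_add z₁ z₂ z₃ lam t τ)
  rw [hf, hshift, nelsonSiegel, exp_neg_mul_add a, exp_neg_two_mul_mul]
  ring

/-- The Hull–White forward curve started from a Nelson–Siegel curve is an
exponentially extended Nelson–Siegel curve. -/
theorem hullWhite_forward_is_exponentially_extended_NS (z₁ z₂ z₃ lam a σ r t : ℝ)
    (hlam : 0 < lam) (ha : 0 < a) (ht : 0 ≤ t)
    (fstar : ℝ → ℝ)
    (hfstar : ∀ τ, fstar τ = z₁ + z₂ * Real.exp (-lam * τ) + z₃ * τ * Real.exp (-lam * τ))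
    (α : ℝ → ℝ)
    (hα : ∀ u, α u = fstar u + σ ^ 2 / (2 * a ^ 2) * (1 - Real.exp (-a * u)) ^ 2)
    (fHW : ℝ → ℝ → ℝ)
    (hf : ∀ τ, fHW t τ =
        -(σ ^ 2 / (2 * a ^ 2)) * (1 - Real.exp (-a * τ)) ^ 2
        + fstar (t + τ) + σ ^ 2 / (2 * a ^ 2) * (1 - Real.exp (-a * (t + τ))) ^ 2
        - α t * Real.exp (-a * τ) + r * Real.exp (-a * τ)) :
    ∃ β₁ β₂ β₃ β₄ β₅ : ℝ, ∀ τ ≥ (0 : ℝ),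
      fHW t τ = β₁ * Real.exp (-a * τ) + β₂ * Real.exp (-(2 * a) * τ) + β₃
        + β₄ * Real.exp (-lam * τ) + β₅ * τ * Real.exp (-lam * τ) :=
  hullWhite_forward_is_exponentially_extended_NS_general z₁ z₂ z₃ lam a σ r t fstar hfstar α fHW hf
end
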